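/- Let Λ be a finite dimensional hereditary algebra over an infinite field K. If the presentation space Hom_Λ(P(γ_1), P(γ_0)) carries a nonzero semi-invariant of determinantal weight β, and α ∈ Z^n satisfies (L^t)^{-1}(γ_0 − γ_1) = α (equivalently dim P(γ_0) − dim P(γ_1) = α), then ⟨α, β⟩ = 0, where ⟨x, y⟩ = x^t E y is the Euler-Ringel pairing. -/

import Mathlib

/-- A function on a finite dimensional vector space is a polynomial (regular) function if
it is given by a multivariate polynomial in the coordinates with respect to a basis. -/
def IsPolynomialFun (K V : Type) [Field K] [AddCommGroup V] [Module K V]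
    [FiniteDimensional K V] (σ : V → K) : Prop :=
  ∃ p : MvPolynomial (Fin (Module.finrank K V)) K,
    ∀ v : V, σ v = MvPolynomial.eval (fun j => (Module.finBasis K V).repr v j) p

/-- The determinantal character: the `K`-determinant of the action of a square matrix over
the division algebra `F` on `F^m` (by right multiplication), viewed as a `K`-linear map. -/
noncomputable def detChar (K : Type) [Field K] (F : Type) [DivisionRing F] [Algebra K F]
    (m : ℕ) (g : Matrix (Fin m) (Fin m) F) : K :=
  LinearMap.det (LinearMap.restrictScalars K (Matrix.vecMulLinear g))

/-!
A scalar `u ∈ Kˣ` acts on `V` in the same way through `ρ₀` and through `ρ₁`. The determinantal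
character of a scalar matrix `u ∈ M_m(F)` is `u ^ (m · dim_K F)`, so semi-invariance of `σ` at a
point where `σ ≠ 0` gives `u ^ (∑ γ₀ᵢ fᵢ βᵢ) = u ^ (∑ γ₁ᵢ fᵢ βᵢ)` for every `u`. The unit group of an
infinite field has exponent `0`, hence the two exponents agree, and their difference is
`αᵀ L D β = ⟨α, β⟩` because `Lᵀ α = γ₀ - γ₁`.
-/

theorem restrictScalars_vecMulLinear_algebraMap (K : Type) [Field K] (F : Type) [DivisionRing F]
    [Algebra K F] (m : ℕ) (c : K) :
    (Matrix.vecMulLinear (algebraMap K (Matrix (Fin m) (Fin m) F) c)).restrictScalars K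
      = c • LinearMap.id := by
  ext v j
  simp [Matrix.algebraMap_eq_diagonal, Matrix.vecMul_diagonal, ← Algebra.commutes,
    ← Algebra.smul_def]

theorem detChar_algebraMap (K : Type) [Field K] (F : Type) [DivisionRing F] [Algebra K F]
    [FiniteDimensional K F] (m : ℕ) (c : K) :
    detChar K F m (algebraMap K _ c) = c ^ (m * Module.finrank K F) := by
  simp [detChar, restrictScalars_vecMulLinear_algebraMap, Module.finrank_pi_fintype]

theorem detChar_one (K : Type) [Field K] (F : Type) [DivisionRing F] [Algebra K F] (m : ℕ) :
    detChar K F m 1 = 1 := by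
  rw [detChar, ← map_one (algebraMap K _), restrictScalars_vecMulLinear_algebraMap, one_smul,
    LinearMap.det_id]

theorem Units.exponent_eq_zero_of_infinite (K : Type*) [Field K] [Infinite K] :
    Monoid.exponent Kˣ = 0 := by
  classical
  refine Monoid.exponent_eq_zero_iff_forall.2 fun d hd => ?_
  obtain ⟨x, hx⟩ :=
    Infinite.exists_notMem_finset (insert 0 (Polynomial.nthRoots d (1 : K)).toFinset)
  simp only [Finset.mem_insert, Multiset.mem_toFinset, Polynomial.mem_nthRoots hd, not_or] at hx
  exact ⟨Units.mk0 x hx.1, fun h => hx.2 (by simpa using congrArg Units.val h)⟩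

theorem Units.eq_of_forall_zpow_eq (K : Type*) [Field K] [Infinite K] {a b : ℤ}
    (h : ∀ u : Kˣ, u ^ a = u ^ b) : a = b := by
  have := (Group.exponent_dvd_sub_iff_zpow_eq_zpow (G := Kˣ)).2 h
  rwa [Units.exponent_eq_zero_of_infinite, Nat.cast_zero, zero_dvd_iff, sub_eq_zero] at this

theorem Finset.prod_zpow_eq_zpow_sum {G : Type*} [CommGroup G] {ι : Type*} (s : Finset ι)
    (c : ι → ℤ) (u : G) : ∏ i ∈ s, u ^ c i = u ^ ∑ i ∈ s, c i := by
  classical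
  induction s using Finset.induction_on with
  | empty => simp
  | insert i s hi ih => rw [prod_insert hi, sum_insert hi, ih, zpow_add]

theorem prod_detChar_algebraMap_zpow (K : Type) [Field K] {ι : Type*} [Fintype ι]
    (F : ι → Type) [∀ i, DivisionRing (F i)] [∀ i, Algebra K (F i)]
    [∀ i, FiniteDimensional K (F i)] (γ : ι → ℕ) (β : ι → ℤ) (u : Kˣ) :
    ∏ i, detChar K (F i) (γ i) (algebraMap K (Matrix (Fin (γ i)) (Fin (γ i)) (F i)) u) ^ β i
      = ((u ^ ∑ i, (γ i * Module.finrank K (F i) : ℤ) * β i : Kˣ) : K) := by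
  rw [← Finset.prod_zpow_eq_zpow_sum, Units.coe_prod]
  refine Finset.prod_congr rfl fun i _ => ?_
  rw [detChar_algebraMap, zpow_mul, Units.val_zpow_eq_zpow_val]
  norm_cast

namespace Matrix

theorem dotProduct_mul_diagonal_mulVec {R : Type*} [CommSemiring R] {ι : Type*} [Fintype ι]
    [DecidableEq ι] (L : Matrix ι ι R) (d x y : ι → R) :
    x ⬝ᵥ ((L * diagonal d) *ᵥ y) = ∑ i, (Lᵀ *ᵥ x) i * d i * y i := by
  rw [dotProduct_mulVec, ← vecMul_vecMul, mulVec_transpose, dotProduct]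
  simp only [vecMul_diagonal]

end Matrix

theorem det_weight_orthogonal_to_dimension_vector_general
    (K : Type) [Field K] [Infinite K] (n : ℕ)
    (F : Fin n → Type) [∀ i, DivisionRing (F i)] [∀ i, Algebra K (F i)]
    [∀ i, FiniteDimensional K (F i)]
    (γ₀ γ₁ : Fin n → ℕ) (β : Fin n → ℤ)
    (V : Type) [AddCommGroup V] [Module K V]
    (ρ₀ : (∀ i, Matrix (Fin (γ₀ i)) (Fin (γ₀ i)) (F i)) →ₐ[K] Module.End K V)
    (ρ₁ : (∀ i, Matrix (Fin (γ₁ i)) (Fin (γ₁ i)) (F i)) →ₐ[K] Module.End K V)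
    (σ : V → K) (hσ : σ ≠ 0)
    (hsemi : ∀ (g₀ : ∀ i, Matrix (Fin (γ₀ i)) (Fin (γ₀ i)) (F i)), (∀ i, IsUnit (g₀ i)) →
      ∀ (g₁ : ∀ i, Matrix (Fin (γ₁ i)) (Fin (γ₁ i)) (F i)), (∀ i, IsUnit (g₁ i)) →
      ∀ v : V, σ (ρ₀ g₀ (ρ₁ g₁ v))
        = σ v * (∏ i, detChar K (F i) (γ₀ i) (g₀ i) ^ β i)
            * ∏ i, detChar K (F i) (γ₁ i) (g₁ i) ^ β i)
    (L : Matrix (Fin n) (Fin n) ℤ) (α : Fin n → ℤ)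
    (hα : L.transpose.mulVec α = fun i => (γ₀ i : ℤ) - (γ₁ i : ℤ)) :
    dotProduct α
      ((L * Matrix.diagonal fun i => (Module.finrank K (F i) : ℤ)).mulVec β) = 0 := by
  obtain ⟨v, hv⟩ : ∃ v, σ v ≠ 0 := Function.ne_iff.1 hσ
  have hscalar : ∀ u : Kˣ, u ^ (∑ i, (γ₀ i * Module.finrank K (F i) : ℤ) * β i)
      = u ^ (∑ i, (γ₁ i * Module.finrank K (F i) : ℤ) * β i) := by
    intro u
    have h₀ := hsemi (algebraMap K _ u) (fun _ => u.isUnit.map (algebraMap K _))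
      1 (fun _ => isUnit_one) v
    have h₁ := hsemi 1 (fun _ => isUnit_one)
      (algebraMap K _ u) (fun _ => u.isUnit.map (algebraMap K _)) v
    simp only [map_one, AlgHom.commutes, Pi.algebraMap_apply, Pi.one_apply, detChar_one,
      one_zpow, Finset.prod_const_one, prod_detChar_algebraMap_zpow, mul_one,
      Module.End.one_apply] at h₀ h₁
    exact Units.val_injective (mul_left_cancel₀ hv (h₀.symm.trans h₁))
  rw [Matrix.dotProduct_mul_diagonal_mulVec, hα,
    ← sub_eq_zero.2 (Units.eq_of_forall_zpow_eq K hscalar), ← Finset.sum_sub_distrib]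
  simp only [sub_mul]

/-- Let `Λ` be a finite dimensional hereditary algebra over an infinite field
`K`.  If the presentation space `Hom_Λ(P(γ₁), P(γ₀))` (a finite dimensional `K`-vector
space `V` with commuting actions of `End_Λ(P(γ_s)) ≅ ∏ᵢ M_{γ_s(i)}(F i)`) carries a
nonzero polynomial semi-invariant of determinantal weight `β`, and `α ∈ ℤⁿ` satisfies
`Lᵀ α = γ₀ − γ₁` (equivalently `dim P(γ₀) − dim P(γ₁) = α`), then `⟨α, β⟩ = 0`, where
`⟨x, y⟩ = xᵀ E y` is the Euler–Ringel pairing with `E = L · D`, `D = diag(fᵢ)`,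
`fᵢ = dim_K (F i)`. -/
theorem det_weight_orthogonal_to_dimension_vector
    (K : Type) [Field K] [Infinite K] (n : ℕ)
    (F : Fin n → Type) [∀ i, DivisionRing (F i)] [∀ i, Algebra K (F i)]
    [∀ i, FiniteDimensional K (F i)]
    (γ₀ γ₁ : Fin n → ℕ) (β : Fin n → ℤ)
    (V : Type) [AddCommGroup V] [Module K V] [FiniteDimensional K V]
    (ρ₀ : (∀ i, Matrix (Fin (γ₀ i)) (Fin (γ₀ i)) (F i)) →ₐ[K] Module.End K V)
    (ρ₁ : (∀ i, Matrix (Fin (γ₁ i)) (Fin (γ₁ i)) (F i)) →ₐ[K] Module.End K V)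
    (hcomm : ∀ a b, Commute (ρ₀ a) (ρ₁ b))
    (σ : V → K) (hpoly : IsPolynomialFun K V σ) (hσ : σ ≠ 0)
    (hsemi : ∀ (g₀ : ∀ i, Matrix (Fin (γ₀ i)) (Fin (γ₀ i)) (F i)), (∀ i, IsUnit (g₀ i)) →
      ∀ (g₁ : ∀ i, Matrix (Fin (γ₁ i)) (Fin (γ₁ i)) (F i)), (∀ i, IsUnit (g₁ i)) →
      ∀ v : V, σ (ρ₀ g₀ (ρ₁ g₁ v))
        = σ v * (∏ i, detChar K (F i) (γ₀ i) (g₀ i) ^ β i)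
            * ∏ i, detChar K (F i) (γ₁ i) (g₁ i) ^ β i)
    (L : Matrix (Fin n) (Fin n) ℤ) (α : Fin n → ℤ)
    (hα : L.transpose.mulVec α = fun i => (γ₀ i : ℤ) - (γ₁ i : ℤ)) :
    dotProduct α
      ((L * Matrix.diagonal fun i => (Module.finrank K (F i) : ℤ)).mulVec β) = 0 :=
  det_weight_orthogonal_to_dimension_vector_general K n F γ₀ γ₁ β V ρ₀ ρ₁ σ hσ hsemi L α hα
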